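/- arXiv:2006.07753 — 5 statements merged into one kernel-verified Lean document; each statement's English description precedes it below -/
import Mathlib

section
/- Chain rule for the logharmonic pre-Schwarzian: if f = h·conj(g) is a sense-preserving logharmonic mapping on a simply connected domain Ω and φ is a locally univalent analytic function whose image lies in Ω, then f∘φ is a sense-preserving logharmonic mapping and P_{f∘φ}(z) = P_f(φ(z))·φ'(z) + Pφ(z), where Pφ = φ''/φ'. -/
open Complex

/-- Second dilatation ω = g'h/(g h') of the logharmonic mapping h·conj g. -/
noncomputable def omegaOf (h g : ℂ → ℂ) (z : ℂ) : ℂ :=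
  deriv g z * h z / (g z * deriv h z)

/-- Pre-Schwarzian derivative of the logharmonic mapping h·conj g. -/
noncomputable def preSch (h g : ℂ → ℂ) (z : ℂ) : ℂ :=
  deriv (deriv h) z / deriv h z + omegaOf h g z * deriv h z / h z -
    deriv (omegaOf h g) z * (starRingEnd ℂ) (omegaOf h g z) /
      (1 - (‖omegaOf h g z‖ : ℂ) ^ 2)

/-! The factors `φ'` contributed by the chain rule to `h'` and `g'` cancel in the dilatation, so
`ω_{f∘φ} = ω_f ∘ φ` near `z`. Differentiating `(h ∘ φ)' = (h' ∘ φ) φ'` and `ω_f ∘ φ` once more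
and substituting into the definition of the pre-Schwarzian gives the formula by field algebra. -/

open Filter Topology

theorem deriv_deriv_comp {𝕜 : Type*} [NontriviallyNormedField 𝕜] {h φ : 𝕜 → 𝕜} {z : 𝕜}
    (hh : ∀ᶠ w in 𝓝 z, DifferentiableAt 𝕜 h (φ w)) (hφ : ∀ᶠ w in 𝓝 z, DifferentiableAt 𝕜 φ w)
    (hh' : DifferentiableAt 𝕜 (deriv h) (φ z)) (hφ' : DifferentiableAt 𝕜 (deriv φ) z) :
    deriv (deriv (h ∘ φ)) z =
      deriv (deriv h) (φ z) * deriv φ z ^ 2 + deriv h (φ z) * deriv (deriv φ) z := by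
  have hderiv : deriv (h ∘ φ) =ᶠ[𝓝 z] fun w => (deriv h ∘ φ) w * deriv φ w := by
    filter_upwards [hh, hφ] with w hhw hφw using deriv_comp w hhw hφw
  rw [hderiv.deriv_eq, deriv_fun_mul (hh'.comp z hφ.self_of_nhds) hφ',
    deriv_comp z hh' hφ.self_of_nhds, Function.comp_apply]
  ring

section Composition

variable {h g φ : ℂ → ℂ} {z : ℂ}

theorem omegaOf_comp (hh : DifferentiableAt ℂ h (φ z)) (hg : DifferentiableAt ℂ g (φ z))
    (hφ : DifferentiableAt ℂ φ z) (hφ' : deriv φ z ≠ 0) :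
    omegaOf (h ∘ φ) (g ∘ φ) z = omegaOf h g (φ z) := by
  simp only [omegaOf, deriv_comp z hh hφ, deriv_comp z hg hφ, Function.comp_apply]
  rw [mul_right_comm, ← mul_assoc, mul_div_mul_right _ _ hφ']

theorem omegaOf_comp_eventuallyEq (hh : AnalyticAt ℂ h (φ z)) (hg : AnalyticAt ℂ g (φ z))
    (hφ : AnalyticAt ℂ φ z) (hφ' : deriv φ z ≠ 0) :
    omegaOf (h ∘ φ) (g ∘ φ) =ᶠ[𝓝 z] omegaOf h g ∘ φ := by
  have hφc := hφ.continuousAt.tendsto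
  filter_upwards [hφc.eventually hh.eventually_analyticAt, hφc.eventually hg.eventually_analyticAt,
    hφ.eventually_analyticAt, hφ.deriv.continuousAt.eventually_ne hφ'] with w hhw hgw hφw hφ'w
  exact omegaOf_comp hhw.differentiableAt hgw.differentiableAt hφw.differentiableAt hφ'w

theorem differentiableAt_omegaOf (hh : AnalyticAt ℂ h z) (hg : AnalyticAt ℂ g z)
    (hg0 : g z ≠ 0) (hh' : deriv h z ≠ 0) : DifferentiableAt ℂ (omegaOf h g) z :=
  (hg.deriv.differentiableAt.mul hh.differentiableAt).div
    (hg.differentiableAt.mul hh.deriv.differentiableAt) (mul_ne_zero hg0 hh')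

theorem preSch_comp (hh : AnalyticAt ℂ h (φ z)) (hg : AnalyticAt ℂ g (φ z))
    (hφ : AnalyticAt ℂ φ z) (hg0 : g (φ z) ≠ 0) (hh' : deriv h (φ z) ≠ 0)
    (hφ' : deriv φ z ≠ 0) :
    preSch (h ∘ φ) (g ∘ φ) z = preSch h g (φ z) * deriv φ z + deriv (deriv φ) z / deriv φ z := by
  have hω := omegaOf_comp_eventuallyEq hh hg hφ hφ'
  have hdω : deriv (omegaOf (h ∘ φ) (g ∘ φ)) z = deriv (omegaOf h g) (φ z) * deriv φ z :=
    hω.deriv_eq.trans (deriv_comp z (differentiableAt_omegaOf hh hg hg0 hh') hφ.differentiableAt)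
  have hd2 := deriv_deriv_comp
    (hφ.continuousAt.tendsto.eventually (hh.eventually_analyticAt.mono fun _ ha ↦ ha.differentiableAt))
    (hφ.eventually_analyticAt.mono fun _ ha ↦ ha.differentiableAt)
    hh.deriv.differentiableAt hφ.deriv.differentiableAt
  unfold preSch
  rw [hd2, hdω, hω.eq_of_nhds, deriv_comp z hh.differentiableAt hφ.differentiableAt]
  simp only [Function.comp_apply]
  field_simp
  ring

end Composition

theorem preSch_chain_rule_general
    (Ω U : Set ℂ) (hΩ : IsOpen Ω) (hU : IsOpen U)
    (h g : ℂ → ℂ)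
    (hh : DifferentiableOn ℂ h Ω) (hg : DifferentiableOn ℂ g Ω)
    (hg0 : ∀ z ∈ Ω, g z ≠ 0)
    (hh' : ∀ z ∈ Ω, deriv h z ≠ 0)
    (hω : ∀ z ∈ Ω, ‖omegaOf h g z‖ < 1)
    (φ : ℂ → ℂ) (hφ : DifferentiableOn ℂ φ U)
    (hφ' : ∀ z ∈ U, deriv φ z ≠ 0) (hφU : Set.MapsTo φ U Ω) :
    ∀ z ∈ U,
      omegaOf (h ∘ φ) (g ∘ φ) z = omegaOf h g (φ z) ∧
      ‖omegaOf (h ∘ φ) (g ∘ φ) z‖ < 1 ∧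
      preSch (h ∘ φ) (g ∘ φ) z =
        preSch h g (φ z) * deriv φ z + deriv (deriv φ) z / deriv φ z := by
  intro z hz
  have hzΩ : φ z ∈ Ω := hφU hz
  have hhA : AnalyticAt ℂ h (φ z) := hh.analyticAt (hΩ.mem_nhds hzΩ)
  have hgA : AnalyticAt ℂ g (φ z) := hg.analyticAt (hΩ.mem_nhds hzΩ)
  have hφA : AnalyticAt ℂ φ z := hφ.analyticAt (hU.mem_nhds hz)
  have hωφ : omegaOf (h ∘ φ) (g ∘ φ) z = omegaOf h g (φ z) :=
    omegaOf_comp hhA.differentiableAt hgA.differentiableAt hφA.differentiableAt (hφ' z hz)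
  exact ⟨hωφ, hωφ ▸ hω _ hzΩ,
    preSch_comp hhA hgA hφA (hg0 _ hzΩ) (hh' _ hzΩ) (hφ' z hz)⟩

theorem preSch_chain_rule
    (Ω U : Set ℂ) (hΩ : IsOpen Ω) (hU : IsOpen U)
    (hconnΩ : IsPreconnected Ω) (hconnU : IsPreconnected U)
    (h g : ℂ → ℂ)
    (hh : DifferentiableOn ℂ h Ω) (hg : DifferentiableOn ℂ g Ω)
    (hh0 : ∀ z ∈ Ω, h z ≠ 0) (hg0 : ∀ z ∈ Ω, g z ≠ 0)
    (hh' : ∀ z ∈ Ω, deriv h z ≠ 0)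
    (hω : ∀ z ∈ Ω, ‖omegaOf h g z‖ < 1)
    (φ : ℂ → ℂ) (hφ : DifferentiableOn ℂ φ U)
    (hφ' : ∀ z ∈ U, deriv φ z ≠ 0) (hφU : Set.MapsTo φ U Ω) :
    ∀ z ∈ U,
      omegaOf (h ∘ φ) (g ∘ φ) z = omegaOf h g (φ z) ∧
      ‖omegaOf (h ∘ φ) (g ∘ φ) z‖ < 1 ∧
      preSch (h ∘ φ) (g ∘ φ) z =
        preSch h g (φ z) * deriv φ z + deriv (deriv φ) z / deriv φ z :=
  preSch_chain_rule_general Ω U hΩ hU h g hh hg hg0 hh' hω φ hφ hφ' hφU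
end

section
/- Let f = h·conj(g) be a sense-preserving logharmonic mapping with dilatation ω, and let L(z) = z^a·conj(z^b) with a ≠ 0. Then F = L∘f = H·conj(G) with H = h^a g^{conj(b)} and G = g^{conj(a)} h^b is logharmonic, its dilatation is W = (conj(a)/a)·(ω + ε)/(1 + conj(ε)ω) with ε = b/conj(a), and P_F = (a+b−1)·h'/h + conj(a+b−1)·g'/g + P_f. In particular, P_{L∘f} = P_f whenever a + b = 1. -/
open Complex

/-!
With `p = h'/h` one has `g'/g = ω p`, so `log H = a log h + b̄ log g` gives `H'/H = (a + b̄ω) p`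
and likewise `G'/G = (āω + b) p`; hence the dilatation of `F` is the Möbius image
`W = (āω + b)/(a + b̄ω)` of `ω`. Differentiating `H' = (a + b̄ω) p H` gives
`H''/H' = h''/h' - p + b̄ω'/(a + b̄ω) + (a + b̄ω) p`, while the Möbius identity
`1 - |W|² = (|a|² - |b|²)(1 - |ω|²)/|a + b̄ω|²` turns `W' W̄/(1 - |W|²)` into
`ω'(aω̄ + b̄)/((a + b̄ω)(1 - |ω|²))`. Adding up, the `ω'`-terms recombine to `-ω' ω̄/(1 - |ω|²)`.
-/

open Filter Topology ComplexConjugate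

lemma omegaOf_eq_logDeriv_div (h g : ℂ → ℂ) (z : ℂ) :
    omegaOf h g z = logDeriv g z / logDeriv h z := by
  simp only [omegaOf, logDeriv_apply, div_div_div_eq, mul_comm (g z)]

lemma logDeriv_eq_omegaOf_mul {h : ℂ → ℂ} (g : ℂ → ℂ) {z : ℂ} (hh0 : h z ≠ 0)
    (hh' : deriv h z ≠ 0) :
    logDeriv g z = omegaOf h g z * logDeriv h z := by
  rw [omegaOf_eq_logDeriv_div, div_mul_cancel₀]
  exact div_ne_zero hh' hh0

lemma logDeriv_eq_deriv_of_exp_eventuallyEq {f L : ℂ → ℂ} {z : ℂ} (hL : DifferentiableAt ℂ L z)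
    (hf : (fun w => exp (L w)) =ᶠ[𝓝 z] f) : logDeriv f z = deriv L z := by
  rw [← (logDeriv_congr_nhds hf).eq_of_nhds]
  simpa [Function.comp_def] using logDeriv_comp (f := exp) differentiableAt_exp hL

lemma logDeriv_of_exp_linearCombination {Ω : Set ℂ} (hΩ : IsOpen Ω) {f₁ f₂ L₁ L₂ F : ℂ → ℂ}
    (c₁ c₂ : ℂ) (hL₁ : DifferentiableOn ℂ L₁ Ω) (hL₂ : DifferentiableOn ℂ L₂ Ω)
    (hf₁ : ∀ z ∈ Ω, exp (L₁ z) = f₁ z) (hf₂ : ∀ z ∈ Ω, exp (L₂ z) = f₂ z)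
    (hF : ∀ z ∈ Ω, F z = exp (c₁ * L₁ z + c₂ * L₂ z)) :
    ∀ z ∈ Ω, logDeriv F z = c₁ * logDeriv f₁ z + c₂ * logDeriv f₂ z := by
  intro z hz
  have hΩz := hΩ.mem_nhds hz
  have hL₁z := hL₁.differentiableAt hΩz
  have hL₂z := hL₂.differentiableAt hΩz
  rw [logDeriv_eq_deriv_of_exp_eventuallyEq ((hL₁z.const_mul c₁).add (hL₂z.const_mul c₂))
      (eventuallyEq_of_mem hΩz hF).symm,
    logDeriv_eq_deriv_of_exp_eventuallyEq hL₁z (eventuallyEq_of_mem hΩz hf₁),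
    logDeriv_eq_deriv_of_exp_eventuallyEq hL₂z (eventuallyEq_of_mem hΩz hf₂),
    deriv_add (hL₁z.const_mul c₁) (hL₂z.const_mul c₂), deriv_const_mul _ hL₁z,
    deriv_const_mul _ hL₂z]

lemma logDeriv_logDeriv {f : ℂ → ℂ} {z : ℂ} (hf : DifferentiableAt ℂ f z)
    (hf' : DifferentiableAt ℂ (deriv f) z) (hf0 : f z ≠ 0) (hf'0 : deriv f z ≠ 0) :
    logDeriv (logDeriv f) z = deriv (deriv f) z / deriv f z - logDeriv f z := by
  have hderiv : deriv (logDeriv f) z = deriv (fun w => deriv f w / f w) z := rfl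
  rw [logDeriv_apply, hderiv, deriv_fun_div hf' hf hf0]
  simp only [logDeriv_apply]
  field_simp

lemma deriv_deriv_div_deriv_of_logDeriv_eventuallyEq {f F D : ℂ → ℂ} {z : ℂ}
    (hF : AnalyticAt ℂ F z) (hf : AnalyticAt ℂ f z) (hD : DifferentiableAt ℂ D z)
    (hF0 : F z ≠ 0) (hf0 : f z ≠ 0) (hf'0 : deriv f z ≠ 0) (hD0 : D z ≠ 0)
    (hlog : logDeriv F =ᶠ[𝓝 z] fun w => D w * logDeriv f w) :
    deriv (deriv F) z / deriv F z =
      deriv (deriv f) z / deriv f z - logDeriv f z + logDeriv D z + D z * logDeriv f z := by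
  have hlogf0 : logDeriv f z ≠ 0 := div_ne_zero hf'0 hf0
  have hF'0 : deriv F z ≠ 0 := by
    intro h0
    have := hlog.eq_of_nhds
    simp only [logDeriv_apply, h0, zero_div] at this
    exact mul_ne_zero hD0 hlogf0 this.symm
  have hlogf : DifferentiableAt ℂ (logDeriv f) z :=
    hf.deriv.differentiableAt.div hf.differentiableAt hf0
  have hFF : deriv (deriv F) z / deriv F z = logDeriv (logDeriv F) z + logDeriv F z := by
    rw [logDeriv_logDeriv hF.differentiableAt hF.deriv.differentiableAt hF0 hF'0]
    ring
  rw [hFF, (logDeriv_congr_nhds hlog).eq_of_nhds, hlog.eq_of_nhds,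
    logDeriv_mul z hD0 hlogf0 hD hlogf, logDeriv_logDeriv hf.differentiableAt
    hf.deriv.differentiableAt hf0 hf'0]
  ring

noncomputable def mobiusMap (a b w : ℂ) : ℂ := (conj a * w + b) / (a + conj b * w)

lemma one_sub_ofReal_norm_sq_ne_zero {w : ℂ} (hw : ‖w‖ < 1) : 1 - (‖w‖ : ℂ) ^ 2 ≠ 0 := by
  rw [← ofReal_pow, ← ofReal_one, ← ofReal_sub, ofReal_ne_zero, sub_ne_zero]
  exact (pow_lt_one₀ (norm_nonneg w) hw two_ne_zero).ne'

lemma add_conj_mul_eq_mul_one_add {a : ℂ} (b w : ℂ) (ha : a ≠ 0) :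
    a + conj b * w = a * (1 + conj (b / conj a) * w) := by
  rw [map_div₀, conj_conj]
  field_simp

lemma mobiusMap_eq_of_ne_zero {a : ℂ} (b w : ℂ) (ha : a ≠ 0) :
    mobiusMap a b w = conj a / a * ((w + b / conj a) / (1 + conj (b / conj a) * w)) := by
  have ha' : conj a ≠ 0 := (map_ne_zero _).mpr ha
  rw [mobiusMap, add_conj_mul_eq_mul_one_add b w ha]
  field_simp

lemma one_sub_ofReal_norm_sq_mobiusMap {a b w : ℂ} (hD : a + conj b * w ≠ 0) :
    1 - (‖mobiusMap a b w‖ : ℂ) ^ 2 =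
      (a * conj a - b * conj b) * (1 - w * conj w) /
        ((a + conj b * w) * conj (a + conj b * w)) := by
  have hD' : conj (a + conj b * w) ≠ 0 := (map_ne_zero _).mpr hD
  rw [← mul_conj', mobiusMap, map_div₀, div_mul_div_comm,
    one_sub_div (mul_ne_zero hD hD')]
  simp only [map_add, map_mul, conj_conj]
  ring

lemma deriv_mobiusMap_comp {a b z : ℂ} {ω : ℂ → ℂ} (hω : DifferentiableAt ℂ ω z)
    (hD : a + conj b * ω z ≠ 0) :
    deriv (fun w => mobiusMap a b (ω w)) z =
      (a * conj a - b * conj b) * deriv ω z / (a + conj b * ω z) ^ 2 := by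
  simp only [mobiusMap]
  rw [deriv_fun_div ((hω.const_mul _).add_const b) ((hω.const_mul _).const_add a) hD,
    deriv_add_const, deriv_const_add, deriv_const_mul _ hω, deriv_const_mul _ hω]
  ring

lemma deriv_mobiusMap_comp_mul_conj_div {a b z : ℂ} {ω : ℂ → ℂ} (hω : DifferentiableAt ℂ ω z)
    (hD : a + conj b * ω z ≠ 0) (hW : 1 - (‖mobiusMap a b (ω z)‖ : ℂ) ^ 2 ≠ 0) :
    deriv (fun w => mobiusMap a b (ω w)) z * conj (mobiusMap a b (ω z)) /
        (1 - (‖mobiusMap a b (ω z)‖ : ℂ) ^ 2) =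
      deriv ω z * (a * conj (ω z) + conj b) / ((a + conj b * ω z) * (1 - (‖ω z‖ : ℂ) ^ 2)) := by
  have hD' : conj (a + conj b * ω z) ≠ 0 := (map_ne_zero _).mpr hD
  rw [one_sub_ofReal_norm_sq_mobiusMap hD] at hW ⊢
  have hab : a * conj a - b * conj b ≠ 0 := left_ne_zero_of_mul (div_ne_zero_iff.mp hW).1
  have hω1 : 1 - ω z * conj (ω z) ≠ 0 := right_ne_zero_of_mul (div_ne_zero_iff.mp hW).1
  rw [deriv_mobiusMap_comp hω hD, ← mul_conj', mobiusMap, map_div₀]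
  simp only [map_add, map_mul, conj_conj] at hD' ⊢
  field_simp

theorem preSch_eq_of_logDeriv_eq_mul {h g H G : ℂ → ℂ} {a b z : ℂ}
    (hh : AnalyticAt ℂ h z) (hg : AnalyticAt ℂ g z) (hH : AnalyticAt ℂ H z)
    (hh0 : h z ≠ 0) (hg0 : g z ≠ 0) (hh' : deriv h z ≠ 0) (hH0 : H z ≠ 0)
    (hω : ‖omegaOf h g z‖ < 1) (hD : a + conj b * omegaOf h g z ≠ 0)
    (hlogH : logDeriv H =ᶠ[𝓝 z] fun w => (a + conj b * omegaOf h g w) * logDeriv h w)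
    (hW : omegaOf H G =ᶠ[𝓝 z] fun w => mobiusMap a b (omegaOf h g w))
    (hW1 : ‖omegaOf H G z‖ < 1) :
    preSch H G z = (a + b - 1) * (deriv h z / h z) +
      conj (a + b - 1) * (deriv g z / g z) + preSch h g z := by
  have hωd : DifferentiableAt ℂ (omegaOf h g) z :=
    (hg.deriv.differentiableAt.mul hh.differentiableAt).div
      (hg.differentiableAt.mul hh.deriv.differentiableAt) (mul_ne_zero hg0 hh')
  have hDd : DifferentiableAt ℂ (fun w => a + conj b * omegaOf h g w) z :=
    (hωd.const_mul _).const_add a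
  have hlogD : logDeriv (fun w => a + conj b * omegaOf h g w) z =
      conj b * deriv (omegaOf h g) z / (a + conj b * omegaOf h g z) := by
    rw [logDeriv_apply, deriv_const_add, deriv_const_mul _ hωd]
  have hH'' := deriv_deriv_div_deriv_of_logDeriv_eventuallyEq hH hh hDd hH0 hh0 hh' hD hlogH
  have hW' := deriv_mobiusMap_comp_mul_conj_div hωd hD
    (hW.eq_of_nhds ▸ one_sub_ofReal_norm_sq_ne_zero hW1)
  have hω1 := one_sub_ofReal_norm_sq_ne_zero hω
  rw [← mul_conj'] at hω1
  have hlogg : deriv g z / g z = omegaOf h g z * (deriv h z / h z) :=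
    logDeriv_eq_omegaOf_mul g hh0 hh'
  rw [preSch, preSch, mul_div_assoc (omegaOf H G z), ← logDeriv_apply H, hlogH.eq_of_nhds, hH'',
    hW.deriv_eq, hW.eq_of_nhds, hW', hlogD, hlogg]
  simp only [mobiusMap, logDeriv_apply, ← mul_conj', map_sub, map_add, map_one]
  field_simp
  ring

theorem preSch_of_affine_logharmonic_composition_general
    (Ω : Set ℂ) (hΩ : IsOpen Ω)
    (h g : ℂ → ℂ)
    (hh : DifferentiableOn ℂ h Ω) (hg : DifferentiableOn ℂ g Ω)
    (hh0 : ∀ z ∈ Ω, h z ≠ 0) (hg0 : ∀ z ∈ Ω, g z ≠ 0)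
    (hh' : ∀ z ∈ Ω, deriv h z ≠ 0)
    (hω : ∀ z ∈ Ω, ‖omegaOf h g z‖ < 1)
    (Lh Lg : ℂ → ℂ)
    (hLh : DifferentiableOn ℂ Lh Ω) (hLg : DifferentiableOn ℂ Lg Ω)
    (hLhlog : ∀ z ∈ Ω, Complex.exp (Lh z) = h z)
    (hLglog : ∀ z ∈ Ω, Complex.exp (Lg z) = g z)
    (a b : ℂ) (ha : a ≠ 0)
    (ε : ℂ) (hε : ε = b / (starRingEnd ℂ) a)
    (H G : ℂ → ℂ)
    (hH : ∀ z ∈ Ω, H z = Complex.exp (a * Lh z + (starRingEnd ℂ) b * Lg z))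
    (hG : ∀ z ∈ Ω, G z = Complex.exp ((starRingEnd ℂ) a * Lg z + b * Lh z))
    (hden : ∀ z ∈ Ω, 1 + (starRingEnd ℂ) ε * omegaOf h g z ≠ 0)
    (hW : ∀ z ∈ Ω, ‖omegaOf H G z‖ < 1) :
    (∀ z ∈ Ω, omegaOf H G z =
      ((starRingEnd ℂ) a / a) * ((omegaOf h g z + ε) /
        (1 + (starRingEnd ℂ) ε * omegaOf h g z))) ∧
    (∀ z ∈ Ω, preSch H G z =
      (a + b - 1) * (deriv h z / h z) +
        (starRingEnd ℂ) (a + b - 1) * (deriv g z / g z) + preSch h g z) ∧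
    (a + b = 1 → ∀ z ∈ Ω, preSch H G z = preSch h g z) := by
  have hD : ∀ z ∈ Ω, a + conj b * omegaOf h g z ≠ 0 := fun z hz => by
    rw [add_conj_mul_eq_mul_one_add b _ ha, ← hε]
    exact mul_ne_zero ha (hden z hz)
  have hlogH : ∀ z ∈ Ω, logDeriv H z = (a + conj b * omegaOf h g z) * logDeriv h z := fun z hz => by
    rw [logDeriv_of_exp_linearCombination hΩ a (conj b) hLh hLg hLhlog hLglog hH z hz,
      logDeriv_eq_omegaOf_mul g (hh0 z hz) (hh' z hz)]
    ring
  have hlogG : ∀ z ∈ Ω, logDeriv G z = (conj a * omegaOf h g z + b) * logDeriv h z := fun z hz => by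
    rw [logDeriv_of_exp_linearCombination hΩ (conj a) b hLg hLh hLglog hLhlog hG z hz,
      logDeriv_eq_omegaOf_mul g (hh0 z hz) (hh' z hz)]
    ring
  have hWeq : ∀ z ∈ Ω, omegaOf H G z = mobiusMap a b (omegaOf h g z) := fun z hz => by
    rw [omegaOf_eq_logDeriv_div, hlogG z hz, hlogH z hz, mobiusMap, mul_div_mul_right _ _
      (show logDeriv h z ≠ 0 from div_ne_zero (hh' z hz) (hh0 z hz))]
  have hHan : AnalyticOnNhd ℂ H Ω :=
    (((hLh.const_mul a).add (hLg.const_mul _)).cexp.congr hH).analyticOnNhd hΩ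
  have hpreSch : ∀ z ∈ Ω, preSch H G z = (a + b - 1) * (deriv h z / h z) +
      conj (a + b - 1) * (deriv g z / g z) + preSch h g z := fun z hz =>
    preSch_eq_of_logDeriv_eq_mul (hh.analyticOnNhd hΩ z hz) (hg.analyticOnNhd hΩ z hz) (hHan z hz)
      (hh0 z hz) (hg0 z hz) (hh' z hz) (by rw [hH z hz]; exact exp_ne_zero _) (hω z hz) (hD z hz)
      (eventuallyEq_of_mem (hΩ.mem_nhds hz) hlogH) (eventuallyEq_of_mem (hΩ.mem_nhds hz) hWeq)
      (hW z hz)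
  refine ⟨fun z hz => ?_, hpreSch, fun hab z hz => by simp [hpreSch z hz, hab]⟩
  rw [hWeq z hz, hε, mobiusMap_eq_of_ne_zero _ _ ha]

theorem preSch_of_affine_logharmonic_composition
    (Ω : Set ℂ) (hΩ : IsOpen Ω) (hconn : IsPreconnected Ω)
    (hsc : SimplyConnectedSpace Ω)
    (h g : ℂ → ℂ)
    (hh : DifferentiableOn ℂ h Ω) (hg : DifferentiableOn ℂ g Ω)
    (hh0 : ∀ z ∈ Ω, h z ≠ 0) (hg0 : ∀ z ∈ Ω, g z ≠ 0)
    (hh' : ∀ z ∈ Ω, deriv h z ≠ 0)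
    (hω : ∀ z ∈ Ω, ‖omegaOf h g z‖ < 1)
    (Lh Lg : ℂ → ℂ)
    (hLh : DifferentiableOn ℂ Lh Ω) (hLg : DifferentiableOn ℂ Lg Ω)
    (hLhlog : ∀ z ∈ Ω, Complex.exp (Lh z) = h z)
    (hLglog : ∀ z ∈ Ω, Complex.exp (Lg z) = g z)
    (a b : ℂ) (ha : a ≠ 0)
    (ε : ℂ) (hε : ε = b / (starRingEnd ℂ) a)
    (H G : ℂ → ℂ)
    (hH : ∀ z ∈ Ω, H z = Complex.exp (a * Lh z + (starRingEnd ℂ) b * Lg z))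
    (hG : ∀ z ∈ Ω, G z = Complex.exp ((starRingEnd ℂ) a * Lg z + b * Lh z))
    (hden : ∀ z ∈ Ω, 1 + (starRingEnd ℂ) ε * omegaOf h g z ≠ 0)
    (hden' : ∀ z ∈ Ω, 1 + ε * omegaOf h g z ≠ 0)
    (hW : ∀ z ∈ Ω, ‖omegaOf H G z‖ < 1) :
    (∀ z ∈ Ω, omegaOf H G z =
      ((starRingEnd ℂ) a / a) * ((omegaOf h g z + ε) /
        (1 + (starRingEnd ℂ) ε * omegaOf h g z))) ∧
    (∀ z ∈ Ω, preSch H G z =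
      (a + b - 1) * (deriv h z / h z) +
        (starRingEnd ℂ) (a + b - 1) * (deriv g z / g z) + preSch h g z) ∧
    (a + b = 1 → ∀ z ∈ Ω, preSch H G z = preSch h g z) :=
  preSch_of_affine_logharmonic_composition_general Ω hΩ h g hh hg hh0 hg0 hh' hω Lh Lg hLh hLg
    hLhlog hLglog a b ha ε hε H G hH hG hden hW
end

section
/- Dilatation transformation under logharmonic affine maps: with f = h·conj(g) of dilatation ω, L(z) = z^a conj(z^b), a ≠ 0, ε = b/conj(a), the logharmonic mapping F = L∘f has dilatation W = (conj(a)/a)·(ω + ε)/(1 + conj(ε)·ω). In particular |W| < 1 on the set where |ω| < 1, provided |ε| < 1. -/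
/-!
Write `h = exp Lh`, `g = exp Lg`; then `ω = Lg' / Lh'`, and `F` has the logarithms
`a Lh + b̄ Lg` and `ā Lg + b Lh`, so its dilatation is `(ā Lg' + b Lh') / (a Lh' + b̄ Lg')`.
Substituting `b = ε ā` and dividing through by `Lh'` gives `(ā / a) (ω + ε) / (1 + ε̄ ω)`.
The bound follows from `|1 + ε̄ ω|² - |ω + ε|² = (1 - |ε|²)(1 - |ω|²)`.
-/

open Complex

open Filter Topology ComplexConjugate

theorem deriv_eq_mul_deriv_of_eventually_exp_eq {f L : ℂ → ℂ} {z : ℂ}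
    (hL : DifferentiableAt ℂ L z) (hf : f =ᶠ[𝓝 z] fun w => exp (L w)) :
    deriv f z = f z * deriv L z := by
  rw [hf.deriv_eq, hf.eq_of_nhds, hL.hasDerivAt.cexp.deriv]

theorem omegaOf_eq_deriv_div_deriv_of_eventually_exp_eq {h g Lh Lg : ℂ → ℂ} {z : ℂ}
    (hLh : DifferentiableAt ℂ Lh z) (hLg : DifferentiableAt ℂ Lg z)
    (hh : h =ᶠ[𝓝 z] fun w => exp (Lh w)) (hg : g =ᶠ[𝓝 z] fun w => exp (Lg w)) :
    omegaOf h g z = deriv Lg z / deriv Lh z := by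
  have hgh : g z * h z ≠ 0 := by
    rw [hh.eq_of_nhds, hg.eq_of_nhds]
    exact mul_ne_zero (exp_ne_zero _) (exp_ne_zero _)
  rw [omegaOf, deriv_eq_mul_deriv_of_eventually_exp_eq hLh hh,
    deriv_eq_mul_deriv_of_eventually_exp_eq hLg hg, ← mul_div_mul_left _ (deriv Lh z) hgh]
  ring

theorem omegaOf_exp_linear_combination {Lh Lg : ℂ → ℂ} {z : ℂ}
    (hLh : DifferentiableAt ℂ Lh z) (hLg : DifferentiableAt ℂ Lg z)
    {H G : ℂ → ℂ} (a b c d : ℂ)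
    (hH : H =ᶠ[𝓝 z] fun w => exp (a * Lh w + c * Lg w))
    (hG : G =ᶠ[𝓝 z] fun w => exp (d * Lg w + b * Lh w)) :
    omegaOf H G z = (d * deriv Lg z + b * deriv Lh z) / (a * deriv Lh z + c * deriv Lg z) := by
  rw [omegaOf_eq_deriv_div_deriv_of_eventually_exp_eq
      ((hLh.const_mul a).add (hLg.const_mul c)) ((hLg.const_mul d).add (hLh.const_mul b)) hH hG,
    ((hLh.hasDerivAt.const_mul a).add (hLg.hasDerivAt.const_mul c)).deriv,
    ((hLg.hasDerivAt.const_mul d).add (hLh.hasDerivAt.const_mul b)).deriv]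

theorem mul_div_mul_eq_div_mul_mobius {K : Type*} [Field K] (c a p q ε ε' : K) (hp : p ≠ 0) :
    c * (q + ε * p) / (a * (p + ε' * q)) = c / a * ((q / p + ε) / (1 + ε' * (q / p))) := by
  rw [mul_div_mul_comm, ← div_div_div_cancel_right₀ hp (q + ε * p)]
  simp only [add_div, mul_div_assoc, div_self hp, mul_one]

theorem normSq_one_add_conj_mul_sub_normSq_add (ε w : ℂ) :
    normSq (1 + conj ε * w) - normSq (w + ε) = (1 - normSq ε) * (1 - normSq w) := by
  simp only [normSq_apply, add_re, add_im, mul_re, mul_im, conj_re, conj_im, one_re, one_im]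
  ring

theorem norm_add_div_one_add_conj_mul_lt_one {ε w : ℂ} (hε : ‖ε‖ < 1) (hw : ‖w‖ < 1) :
    ‖(w + ε) / (1 + conj ε * w)‖ < 1 := by
  have key := normSq_one_add_conj_mul_sub_normSq_add ε w
  simp only [normSq_eq_norm_sq] at key
  have hpos : 0 < (1 - ‖ε‖ ^ 2) * (1 - ‖w‖ ^ 2) :=
    mul_pos (by nlinarith [norm_nonneg ε]) (by nlinarith [norm_nonneg w])
  have hnorm : ‖w + ε‖ < ‖1 + conj ε * w‖ := by
    rw [← sq_lt_sq₀ (norm_nonneg _) (norm_nonneg _)]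
    linarith
  rw [norm_div, div_lt_one ((norm_nonneg _).trans_lt hnorm)]
  exact hnorm

theorem dilatation_of_affine_logharmonic_composition_general
    (Ω : Set ℂ) (hΩ : IsOpen Ω)
    (h g : ℂ → ℂ)
    (hh' : ∀ z ∈ Ω, deriv h z ≠ 0)
    (Lh Lg : ℂ → ℂ)
    (hLh : DifferentiableOn ℂ Lh Ω) (hLg : DifferentiableOn ℂ Lg Ω)
    (hLhlog : ∀ z ∈ Ω, Complex.exp (Lh z) = h z)
    (hLglog : ∀ z ∈ Ω, Complex.exp (Lg z) = g z)
    (a b : ℂ) (ha : a ≠ 0)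
    (ε : ℂ) (hε : ε = b / (starRingEnd ℂ) a)
    (H G : ℂ → ℂ)
    (hH : ∀ z ∈ Ω, H z = Complex.exp (a * Lh z + (starRingEnd ℂ) b * Lg z))
    (hG : ∀ z ∈ Ω, G z = Complex.exp ((starRingEnd ℂ) a * Lg z + b * Lh z)) :
    (∀ z ∈ Ω, omegaOf H G z =
      ((starRingEnd ℂ) a / a) * ((omegaOf h g z + ε) /
        (1 + (starRingEnd ℂ) ε * omegaOf h g z))) ∧
    (‖ε‖ < 1 → ∀ z ∈ Ω, ‖omegaOf h g z‖ < 1 → ‖omegaOf H G z‖ < 1) := by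
  have hā : conj a ≠ 0 := (map_ne_zero _).2 ha
  have hb : b = ε * conj a := by rw [hε, div_mul_cancel₀ _ hā]
  have hW : ∀ z ∈ Ω, omegaOf H G z = conj a / a * ((omegaOf h g z + ε) /
      (1 + conj ε * omegaOf h g z)) := by
    intro z hz
    have hzΩ := hΩ.mem_nhds hz
    have hLhz := hLh.differentiableAt hzΩ
    have hLgz := hLg.differentiableAt hzΩ
    have hhz : h =ᶠ[𝓝 z] fun w => exp (Lh w) :=
      eventually_of_mem hzΩ fun w hw => (hLhlog w hw).symm
    have hgz : g =ᶠ[𝓝 z] fun w => exp (Lg w) :=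
      eventually_of_mem hzΩ fun w hw => (hLglog w hw).symm
    have hp : deriv Lh z ≠ 0 := fun h0 => hh' z hz <| by
      rw [deriv_eq_mul_deriv_of_eventually_exp_eq hLhz hhz, h0, mul_zero]
    rw [omegaOf_exp_linear_combination hLhz hLgz _ _ _ _ (eventually_of_mem hzΩ hH)
        (eventually_of_mem hzΩ hG),
      omegaOf_eq_deriv_div_deriv_of_eventually_exp_eq hLhz hLgz hhz hgz,
      ← mul_div_mul_eq_div_mul_mobius _ _ _ _ _ _ hp, hb, map_mul, conj_conj]
    congr 1 <;> ring
  refine ⟨hW, fun hε1 z hz hω1 => ?_⟩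
  rw [hW z hz, norm_mul, norm_div, RCLike.norm_conj, div_self (norm_ne_zero_iff.2 ha), one_mul]
  exact norm_add_div_one_add_conj_mul_lt_one hε1 hω1

theorem dilatation_of_affine_logharmonic_composition
    (Ω : Set ℂ) (hΩ : IsOpen Ω) (hconn : IsPreconnected Ω)
    (hsc : SimplyConnectedSpace Ω)
    (h g : ℂ → ℂ)
    (hh : DifferentiableOn ℂ h Ω) (hg : DifferentiableOn ℂ g Ω)
    (hh0 : ∀ z ∈ Ω, h z ≠ 0) (hg0 : ∀ z ∈ Ω, g z ≠ 0)
    (hh' : ∀ z ∈ Ω, deriv h z ≠ 0)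
    (Lh Lg : ℂ → ℂ)
    (hLh : DifferentiableOn ℂ Lh Ω) (hLg : DifferentiableOn ℂ Lg Ω)
    (hLhlog : ∀ z ∈ Ω, Complex.exp (Lh z) = h z)
    (hLglog : ∀ z ∈ Ω, Complex.exp (Lg z) = g z)
    (a b : ℂ) (ha : a ≠ 0)
    (ε : ℂ) (hε : ε = b / (starRingEnd ℂ) a)
    (H G : ℂ → ℂ)
    (hH : ∀ z ∈ Ω, H z = Complex.exp (a * Lh z + (starRingEnd ℂ) b * Lg z))
    (hG : ∀ z ∈ Ω, G z = Complex.exp ((starRingEnd ℂ) a * Lg z + b * Lh z))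
    (hden' : ∀ z ∈ Ω, 1 + ε * omegaOf h g z ≠ 0) :
    (∀ z ∈ Ω, omegaOf H G z =
      ((starRingEnd ℂ) a / a) * ((omegaOf h g z + ε) /
        (1 + (starRingEnd ℂ) ε * omegaOf h g z))) ∧
    (‖ε‖ < 1 → ∀ z ∈ Ω, ‖omegaOf h g z‖ < 1 → ‖omegaOf H G z‖ < 1) :=
  dilatation_of_affine_logharmonic_composition_general Ω hΩ h g hh' Lh Lg hLh hLg hLhlog hLglog a b
    ha ε hε H G hH hG
end

section
/- Let ω_f and ω_F be analytic self-maps of the unit disk with ω_f(0) = ω_F(0) = 0 and ω_f'(0) ≠ 0, satisfying |ω_f'(z)|²/(1−|ω_f(z)|²)² = |ω_F'(z)|²/(1−|ω_F(z)|²)² for all z ∈ 𝔻. Then there exists λ with |λ| = 1 such that ω_F = λ·ω_f on 𝔻. -/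
/-!
Cross-multiplied, the hypothesis says that `G(z, w) = K_{F,f}(z, w) - K_{f,F}(z, w)` vanishes on
`w = conj z`, where `K_{f,F}` is the polarization of `|f'|² (1 - |F|²)²`, a holomorphic function
of two variables. In the coordinates `z = x + i y`, `w = x - i y` the zero set contains all real
`(x, y)`, so the identity theorem in each variable separately makes `G` vanish wherever
`|z + w| < 1` and `|z - w| < 1`.
At `w = 0` this reads `F'(z) conj F'(0) = f'(z) conj f'(0)`; since `|F'(0)| = |f'(0)| ≠ 0`, this
gives `F' = λ f'` with `|λ| = 1`, and `F = λ f` because both vanish at `0`.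
-/

open Complex ComplexConjugate Filter Metric Set Topology

theorem eqOn_zero_of_ofReal_eq_zero {g : ℂ → ℂ} {r : ℝ}
    (hg : DifferentiableOn ℂ g (ball 0 r)) (hreal : ∀ t : ℝ, |t| < r → g t = 0) :
    EqOn g 0 (ball 0 r) := by
  intro z hz
  have hr : 0 < r := pos_of_mem_ball hz
  have hofReal : Tendsto ofReal (𝓝[≠] 0) (𝓝[≠] (0 : ℂ)) :=
    continuous_ofReal.continuousWithinAt.tendsto_nhdsWithin fun _ _ ↦ by simp_all
  have hzeros : ∃ᶠ w in 𝓝[≠] (0 : ℂ), g w = 0 :=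
    hofReal.frequently <| Eventually.frequently <| nhdsWithin_le_nhds <|
      (eventually_abs_sub_lt 0 hr).mono fun t ht ↦ hreal t (by simpa using ht)
  exact (hg.analyticOnNhd isOpen_ball).eqOn_zero_of_preconnected_of_frequently_eq_zero
    (convex_ball 0 r).isPreconnected (mem_ball_self hr) hzeros hz

theorem eq_zero_of_eq_zero_on_conj_graph {G : ℂ × ℂ → ℂ} {r : ℝ}
    (hG : DifferentiableOn ℂ G (ball 0 r ×ˢ ball 0 r))
    (hconj : ∀ z ∈ ball (0 : ℂ) r, G (z, conj z) = 0)
    {z w : ℂ} (hz : ‖z + w‖ < r) (hw : ‖z - w‖ < r) : G (z, w) = 0 := by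
  set H : ℂ → ℂ → ℂ := fun x y ↦ G (x + I * y, x - I * y)
  have hmaps : ∀ x ∈ ball (0 : ℂ) (r / 2), ∀ y ∈ ball (0 : ℂ) (r / 2),
      (x + I * y, x - I * y) ∈ ball 0 r ×ˢ ball 0 r := by
    intro x hx y hy
    rw [mem_ball_zero_iff] at hx hy
    have hIy : ‖I * y‖ = ‖y‖ := by simp
    refine ⟨?_, ?_⟩ <;> rw [mem_ball_zero_iff]
    · linarith [norm_add_le x (I * y)]
    · linarith [norm_sub_le x (I * y)]
  have hHx : ∀ y ∈ ball (0 : ℂ) (r / 2), DifferentiableOn ℂ (H · y) (ball 0 (r / 2)) :=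
    fun y hy ↦ hG.comp (by fun_prop) fun x hx ↦ hmaps x hx y hy
  have hHy : ∀ x ∈ ball (0 : ℂ) (r / 2), DifferentiableOn ℂ (H x) (ball 0 (r / 2)) :=
    fun x hx ↦ hG.comp (by fun_prop) fun y hy ↦ hmaps x hx y hy
  have hreal : ∀ t : ℝ, |t| < r / 2 → ∀ x ∈ ball (0 : ℂ) (r / 2), H x t = 0 := by
    intro t ht
    have htmem : (t : ℂ) ∈ ball (0 : ℂ) (r / 2) := by simpa using ht
    refine eqOn_zero_of_ofReal_eq_zero (hHx t htmem) fun s hs ↦ ?_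
    have hsmem : (s : ℂ) ∈ ball (0 : ℂ) (r / 2) := by simpa using hs
    have hconj_st : conj (s + I * t) = s - I * t := by simp [sub_eq_add_neg]
    simpa only [H, hconj_st] using hconj _ (hmaps s hsmem t htmem).1
  have hH : ∀ x ∈ ball (0 : ℂ) (r / 2), ∀ y ∈ ball (0 : ℂ) (r / 2), H x y = 0 :=
    fun x hx ↦ eqOn_zero_of_ofReal_eq_zero (hHy x hx) fun t ht ↦ hreal t ht x hx
  have hx : (z + w) / 2 ∈ ball (0 : ℂ) (r / 2) := by
    rw [mem_ball_zero_iff, norm_div, Complex.norm_two]; linarith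
  have hy : -I * (z - w) / 2 ∈ ball (0 : ℂ) (r / 2) := by
    rw [mem_ball_zero_iff, norm_div, norm_mul, norm_neg, norm_I, one_mul, Complex.norm_two]
    linarith
  have hzw : ((z + w) / 2 + I * (-I * (z - w) / 2), (z + w) / 2 - I * (-I * (z - w) / 2))
      = (z, w) := by
    ext
    · linear_combination -(z - w) / 2 * I_mul_I
    · linear_combination (z - w) / 2 * I_mul_I
  simpa only [H, hzw] using hH _ hx _ hy

-- The polarization of `‖deriv f z‖ ^ 2 * (1 - ‖F z‖ ^ 2) ^ 2`: `conj z` becomes a free variable.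
noncomputable def hyperbolicKernel (f F : ℂ → ℂ) (p : ℂ × ℂ) : ℂ :=
  deriv f p.1 * (conj ∘ deriv f ∘ conj) p.2 * (1 - F p.1 * (conj ∘ F ∘ conj) p.2) ^ 2

theorem hyperbolicKernel_conj (f F : ℂ → ℂ) (z : ℂ) :
    hyperbolicKernel f F (z, conj z) = ((‖deriv f z‖ ^ 2 * (1 - ‖F z‖ ^ 2) ^ 2 : ℝ) : ℂ) := by
  simp only [hyperbolicKernel, Function.comp_apply, conj_conj, mul_conj, normSq_eq_norm_sq]
  push_cast
  ring

theorem hyperbolicKernel_zero (f : ℂ → ℂ) {F : ℂ → ℂ} (hF : F 0 = 0) (z : ℂ) :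
    hyperbolicKernel f F (z, 0) = deriv f z * conj (deriv f 0) := by
  simp [hyperbolicKernel, hF]

theorem DifferentiableOn.conj_conj_ball {g : ℂ → ℂ} {r : ℝ}
    (hg : DifferentiableOn ℂ g (ball 0 r)) : DifferentiableOn ℂ (conj ∘ g ∘ conj) (ball 0 r) :=
  fun z hz ↦ (differentiableAt_conj_conj_iff.2 <|
    hg.differentiableAt <| isOpen_ball.mem_nhds <| by simpa using hz).differentiableWithinAt

theorem differentiableOn_hyperbolicKernel {f F : ℂ → ℂ} {r : ℝ}
    (hf : DifferentiableOn ℂ f (ball 0 r)) (hF : DifferentiableOn ℂ F (ball 0 r)) :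
    DifferentiableOn ℂ (hyperbolicKernel f F) (ball 0 r ×ˢ ball 0 r) := by
  have hf' : DifferentiableOn ℂ (deriv f) (ball 0 r) :=
    (hf.analyticOnNhd isOpen_ball).deriv.differentiableOn
  have hfst : ∀ {g : ℂ → ℂ}, DifferentiableOn ℂ g (ball 0 r) →
      DifferentiableOn ℂ (fun p : ℂ × ℂ ↦ g p.1) (ball 0 r ×ˢ ball 0 r) :=
    fun hg ↦ hg.comp differentiableOn_fst mapsTo_fst_prod
  have hsnd : ∀ {g : ℂ → ℂ}, DifferentiableOn ℂ g (ball 0 r) →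
      DifferentiableOn ℂ (fun p : ℂ × ℂ ↦ g p.2) (ball 0 r ×ˢ ball 0 r) :=
    fun hg ↦ hg.comp differentiableOn_snd mapsTo_snd_prod
  exact ((hfst hf').mul (hsnd hf'.conj_conj_ball)).mul
    (((differentiableOn_const 1).sub ((hfst hF).mul (hsnd hF.conj_conj_ball))).pow 2)

theorem deriv_mul_conj_deriv_zero_eq_of_hyperbolic_eq {f F : ℂ → ℂ} {r : ℝ}
    (hf : DifferentiableOn ℂ f (ball 0 r)) (hF : DifferentiableOn ℂ F (ball 0 r))
    (hmapf : MapsTo f (ball 0 r) (ball 0 1)) (hmapF : MapsTo F (ball 0 r) (ball 0 1))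
    (h0f : f 0 = 0) (h0F : F 0 = 0)
    (heq : ∀ z ∈ ball (0 : ℂ) r,
      ‖deriv f z‖ ^ 2 / (1 - ‖f z‖ ^ 2) ^ 2 = ‖deriv F z‖ ^ 2 / (1 - ‖F z‖ ^ 2) ^ 2)
    {z : ℂ} (hz : z ∈ ball (0 : ℂ) r) :
    deriv F z * conj (deriv F 0) = deriv f z * conj (deriv f 0) := by
  have hdenom : ∀ {g : ℂ → ℂ}, MapsTo g (ball 0 r) (ball 0 1) → ∀ z ∈ ball (0 : ℂ) r,
      (1 - ‖g z‖ ^ 2) ^ 2 ≠ 0 := by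
    intro g hg z hz
    exact pow_ne_zero 2 (by nlinarith [mem_ball_zero_iff.1 (hg hz), norm_nonneg (g z)])
  have hdiag : ∀ z ∈ ball (0 : ℂ) r,
      (hyperbolicKernel F f - hyperbolicKernel f F) (z, conj z) = 0 := by
    intro z hz
    have hcross := (div_eq_div_iff (hdenom hmapf z hz) (hdenom hmapF z hz)).1 (heq z hz)
    simp only [Pi.sub_apply, hyperbolicKernel_conj, hcross, sub_self]
  have hzero := eq_zero_of_eq_zero_on_conj_graph
    ((differentiableOn_hyperbolicKernel hF hf).sub (differentiableOn_hyperbolicKernel hf hF))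
    hdiag (w := 0) (by simpa using hz) (by simpa using hz)
  rwa [Pi.sub_apply, hyperbolicKernel_zero F h0f, hyperbolicKernel_zero f h0F, sub_eq_zero]
    at hzero

theorem dilatation_rotation_of_equal_hyperbolic_derivative
    (ωf ωF : ℂ → ℂ)
    (hωf : DifferentiableOn ℂ ωf (Metric.ball (0 : ℂ) 1))
    (hωF : DifferentiableOn ℂ ωF (Metric.ball (0 : ℂ) 1))
    (hmapf : Set.MapsTo ωf (Metric.ball (0 : ℂ) 1) (Metric.ball (0 : ℂ) 1))
    (hmapF : Set.MapsTo ωF (Metric.ball (0 : ℂ) 1) (Metric.ball (0 : ℂ) 1))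
    (h0f : ωf 0 = 0) (h0F : ωF 0 = 0) (h'f : deriv ωf 0 ≠ 0)
    (heq : ∀ z ∈ Metric.ball (0 : ℂ) 1,
      ‖deriv ωf z‖ ^ 2 / (1 - ‖ωf z‖ ^ 2) ^ 2 =
      ‖deriv ωF z‖ ^ 2 / (1 - ‖ωF z‖ ^ 2) ^ 2) :
    ∃ lam : ℂ, ‖lam‖ = 1 ∧ ∀ z ∈ Metric.ball (0 : ℂ) 1, ωF z = lam * ωf z := by
  have h0 : (0 : ℂ) ∈ ball (0 : ℂ) 1 := mem_ball_self one_pos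
  have hnorm : ‖deriv ωF 0‖ = ‖deriv ωf 0‖ := by
    simpa [h0f, h0F] using (heq 0 h0).symm
  have h'F : conj (deriv ωF 0) ≠ 0 := by
    rw [map_ne_zero, ← norm_ne_zero_iff, hnorm, norm_ne_zero_iff]
    exact h'f
  set lam := conj (deriv ωf 0) / conj (deriv ωF 0)
  have hlam : ‖lam‖ = 1 := by
    rw [norm_div, norm_conj, norm_conj, hnorm, div_self (norm_ne_zero_iff.2 h'f)]
  have hderiv : EqOn (deriv ωF) (deriv (fun z ↦ lam * ωf z)) (ball 0 1) := by
    intro z hz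
    rw [deriv_const_mul lam (hωf.differentiableAt (isOpen_ball.mem_nhds hz)),
      div_mul_eq_mul_div, eq_div_iff h'F]
    linear_combination deriv_mul_conj_deriv_zero_eq_of_hyperbolic_eq hωf hωF hmapf hmapF h0f h0F
      heq hz
  exact ⟨lam, hlam, isOpen_ball.eqOn_of_deriv_eq (convex_ball 0 1).isPreconnected hωF
    (hωf.const_mul lam) hderiv h0 (by simp [h0f, h0F])⟩
end

section
/- If f = h·conj(g) is a nonvanishing logharmonic sense-preserving mapping, then F = log f = log h + conj(log g) is a sense-preserving harmonic mapping (on a simply connected domain, using branches of log h, log g), its second complex dilatation equals the dilatation ω of f, and its harmonic pre-Schwarzian satisfies P_F = P_f − (1 + ω)·h'/h. -/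
open Complex

/-- Pre-Schwarzian derivative of the harmonic mapping H + conj G
(with dilatation ω = G'/H'). -/
noncomputable def preSchHarm (H G : ℂ → ℂ) (z : ℂ) : ℂ :=
  deriv (deriv H) z / deriv H z -
    deriv (fun w => deriv G w / deriv H w) z *
      (starRingEnd ℂ) (deriv G z / deriv H z) /
      (1 - (‖deriv G z / deriv H z‖ : ℂ) ^ 2)

/-! Since `exp ∘ Lh = h`, the derivative of the branch `Lh` is the logarithmic derivative
`h'/h`, and likewise `Lg' = g'/g`. Hence the dilatation of `Lh + conj Lg` is
`(g'/g)/(h'/h) = g'h/(gh') = ω`, and `Lh''/Lh' = (h'/h)'/(h'/h) = h''/h' - h'/h`, which is the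
difference between the two pre-Schwarzians. -/

open Filter Set Topology

theorem Complex.eqOn_deriv_logDeriv_of_exp_eqOn {s : Set ℂ} {L f : ℂ → ℂ} (hs : IsOpen s)
    (hL : DifferentiableOn ℂ L s) (hLf : EqOn (exp ∘ L) f s) :
    EqOn (deriv L) (logDeriv f) s := by
  intro z hz
  have hexp : exp ∘ L =ᶠ[𝓝 z] f := eventually_of_mem (hs.mem_nhds hz) hLf
  rw [← (logDeriv_congr_nhds hexp).eq_of_nhds,
    logDeriv_comp differentiableAt_exp (hL.differentiableAt (hs.mem_nhds hz)),
    logDeriv_exp, Pi.one_apply, one_mul]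

theorem deriv_logDeriv_div_logDeriv {𝕜 𝕜' : Type*} [NontriviallyNormedField 𝕜]
    [NontriviallyNormedField 𝕜'] [NormedAlgebra 𝕜 𝕜'] {f : 𝕜 → 𝕜'} {z : 𝕜}
    (hf : DifferentiableAt 𝕜 f z) (hf' : DifferentiableAt 𝕜 (deriv f) z) (hf0 : f z ≠ 0) :
    deriv (logDeriv f) z / logDeriv f z = deriv (deriv f) z / deriv f z - logDeriv f z := by
  have hquot : deriv (logDeriv f) z = (deriv (deriv f) z * f z - deriv f z ^ 2) / f z ^ 2 := by
    rw [show logDeriv f = deriv f / f from rfl, deriv_div hf' hf hf0]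
    ring
  rw [hquot, logDeriv_apply]
  -- when `f' z = 0` both sides are `0`, by the convention `x / 0 = 0`
  rcases eq_or_ne (deriv f z) 0 with hf'0 | hf'0
  · simp [hf'0]
  · field_simp

theorem omegaOf_eq_logDeriv_div_logDeriv (h g : ℂ → ℂ) :
    omegaOf h g = fun z => logDeriv g z / logDeriv h z := by
  funext z
  rw [omegaOf, logDeriv_apply, logDeriv_apply, div_div_div_eq]

theorem log_of_logharmonic_is_harmonic_general
    (Ω : Set ℂ) (hΩ : IsOpen Ω)
    (h g : ℂ → ℂ)
    (hh : DifferentiableOn ℂ h Ω)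
    (hh0 : ∀ z ∈ Ω, h z ≠ 0)
    (hω : ∀ z ∈ Ω, ‖omegaOf h g z‖ < 1)
    (Lh Lg : ℂ → ℂ)
    (hLh : DifferentiableOn ℂ Lh Ω) (hLg : DifferentiableOn ℂ Lg Ω)
    (hLhlog : ∀ z ∈ Ω, Complex.exp (Lh z) = h z)
    (hLglog : ∀ z ∈ Ω, Complex.exp (Lg z) = g z) :
    ∀ z ∈ Ω,
      deriv Lg z / deriv Lh z = omegaOf h g z ∧
      ‖deriv Lg z / deriv Lh z‖ < 1 ∧
      preSchHarm Lh Lg z =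
        preSch h g z - (1 + omegaOf h g z) * (deriv h z / h z) := by
  have hLh' := eqOn_deriv_logDeriv_of_exp_eqOn hΩ hLh hLhlog
  have hLg' := eqOn_deriv_logDeriv_of_exp_eqOn hΩ hLg hLglog
  have hdil : ∀ w ∈ Ω, deriv Lg w / deriv Lh w = omegaOf h g w := fun w hw => by
    rw [omegaOf_eq_logDeriv_div_logDeriv, hLh' hw, hLg' hw]
  intro z hz
  have hzΩ : Ω ∈ 𝓝 z := hΩ.mem_nhds hz
  refine ⟨hdil z hz, (hdil z hz).symm ▸ hω z hz, ?_⟩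
  have hLh'' : deriv (deriv Lh) z = deriv (logDeriv h) z :=
    (eventuallyEq_of_mem hzΩ hLh').deriv_eq
  have hdil' : deriv (fun w => deriv Lg w / deriv Lh w) z = deriv (omegaOf h g) z :=
    (eventuallyEq_of_mem (f := fun w => deriv Lg w / deriv Lh w) hzΩ hdil).deriv_eq
  have hratio := deriv_logDeriv_div_logDeriv (hh.differentiableAt hzΩ)
    ((hh.analyticOnNhd hΩ).deriv z hz).differentiableAt (hh0 z hz)
  rw [preSchHarm, preSch, hdil z hz, hdil', hLh'', hLh' hz, hratio, logDeriv_apply]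
  ring

theorem log_of_logharmonic_is_harmonic
    (Ω : Set ℂ) (hΩ : IsOpen Ω) (hconn : IsPreconnected Ω)
    (hsc : SimplyConnectedSpace Ω)
    (h g : ℂ → ℂ)
    (hh : DifferentiableOn ℂ h Ω) (hg : DifferentiableOn ℂ g Ω)
    (hh0 : ∀ z ∈ Ω, h z ≠ 0) (hg0 : ∀ z ∈ Ω, g z ≠ 0)
    (hh' : ∀ z ∈ Ω, deriv h z ≠ 0)
    (hω : ∀ z ∈ Ω, ‖omegaOf h g z‖ < 1)
    (Lh Lg : ℂ → ℂ)
    (hLh : DifferentiableOn ℂ Lh Ω) (hLg : DifferentiableOn ℂ Lg Ω)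
    (hLhlog : ∀ z ∈ Ω, Complex.exp (Lh z) = h z)
    (hLglog : ∀ z ∈ Ω, Complex.exp (Lg z) = g z) :
    ∀ z ∈ Ω,
      deriv Lg z / deriv Lh z = omegaOf h g z ∧
      ‖deriv Lg z / deriv Lh z‖ < 1 ∧
      preSchHarm Lh Lg z =
        preSch h g z - (1 + omegaOf h g z) * (deriv h z / h z) :=
  log_of_logharmonic_is_harmonic_general Ω hΩ h g hh hh0 hω Lh Lg hLh hLg hLhlog hLglog
end
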